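/- Let φ and ψ be finite potent endomorphisms of a k-vector space V such that the commutator [φ,ψ] = φ∘ψ − ψ∘φ has finite rank (i.e., its image is finite-dimensional). Then φ + ψ is a finite potent endomorphism of V. -/

import Mathlib

/-- An endomorphism `φ` of a `k`-vector space `V` is *finite potent* if `φ^n(V)` is
finite-dimensional for some `n ≥ 1`. -/
def IsFinitePotent {k V : Type*} [Field k] [AddCommGroup V] [Module k V]
    (φ : V →ₗ[k] V) : Prop :=
  ∃ n : ℕ, 1 ≤ n ∧ FiniteDimensional k (LinearMap.range (φ ^ n))

/-!
Finite-rank endomorphisms form a two-sided ideal of `End k V`, and `φ` is finite potent exactly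
when its image in the quotient ring is nilpotent. The hypothesis on the commutator says that the
images of `φ` and `ψ` commute, and a sum of commuting nilpotents is nilpotent.
-/

namespace TwoSidedIdeal

variable {R : Type*} [Ring R] (I : TwoSidedIdeal R)

theorem isNilpotent_mk'_iff (x : R) : IsNilpotent (I.ringCon.mk' x) ↔ ∃ n, x ^ n ∈ I := by
  simp only [IsNilpotent, ← map_pow, ← mem_ker, ker_ringCon_mk']

theorem exists_pow_add_mem {a b : R} (ha : ∃ n, a ^ n ∈ I) (hb : ∃ n, b ^ n ∈ I)
    (hab : a * b - b * a ∈ I) : ∃ n, (a + b) ^ n ∈ I := by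
  have hcomm : Commute (I.ringCon.mk' a) (I.ringCon.mk' b) := by
    rwa [Commute, SemiconjBy, ← map_mul, ← map_mul, ← sub_eq_zero, ← map_sub, ← mem_ker,
      ker_ringCon_mk']
  rw [← isNilpotent_mk'_iff] at ha hb ⊢
  rw [map_add]
  exact hcomm.isNilpotent_add ha hb

end TwoSidedIdeal

namespace Module.End

variable {k V : Type*} [DivisionRing k] [AddCommGroup V] [Module k V]

variable (k V) in
def finiteRankIdeal : TwoSidedIdeal (Module.End k V) :=
  .mk' {f | FiniteDimensional k (LinearMap.range f)}
    (show FiniteDimensional k (LinearMap.range 0) by rw [LinearMap.range_zero]; infer_instance)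
    (fun {f g} (_ : FiniteDimensional k (LinearMap.range f))
      (_ : FiniteDimensional k (LinearMap.range g)) =>
      Submodule.finiteDimensional_of_le (LinearMap.range_add_le f g))
    (fun {f} (hf : FiniteDimensional k (LinearMap.range f)) =>
      show FiniteDimensional k (LinearMap.range (-f)) by rwa [LinearMap.range_neg])
    (fun {f g} (_ : FiniteDimensional k (LinearMap.range g)) =>
      show FiniteDimensional k (LinearMap.range (f * g)) by
        rw [mul_eq_comp, LinearMap.range_comp]
        exact Module.Finite.map _ f)
    (fun {f g} (_ : FiniteDimensional k (LinearMap.range f)) =>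
      Submodule.finiteDimensional_of_le (LinearMap.range_comp_le_range g f))

theorem mem_finiteRankIdeal {f : Module.End k V} :
    f ∈ finiteRankIdeal k V ↔ FiniteDimensional k (LinearMap.range f) :=
  TwoSidedIdeal.mem_mk' ..

end Module.End

open Module.End

theorem isFinitePotent_iff_exists_pow_mem_finiteRankIdeal {k V : Type*} [Field k]
    [AddCommGroup V] [Module k V] (φ : V →ₗ[k] V) :
    IsFinitePotent φ ↔ ∃ n, φ ^ n ∈ finiteRankIdeal k V := by
  refine ⟨fun ⟨n, _, hn⟩ => ⟨n, mem_finiteRankIdeal.2 hn⟩, fun ⟨n, hn⟩ => ⟨n + 1, le_add_self, ?_⟩⟩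
  rw [pow_succ, ← mem_finiteRankIdeal]
  exact (finiteRankIdeal k V).mul_mem_right _ _ hn

theorem isFinitePotent_add_of_finiteRank_commutator
    {k V : Type*} [Field k] [AddCommGroup V] [Module k V]
    (φ ψ : V →ₗ[k] V) (hφ : IsFinitePotent φ) (hψ : IsFinitePotent ψ)
    (hcomm : FiniteDimensional k (LinearMap.range (φ * ψ - ψ * φ))) :
    IsFinitePotent (φ + ψ) := by
  rw [isFinitePotent_iff_exists_pow_mem_finiteRankIdeal] at hφ hψ ⊢
  exact (finiteRankIdeal k V).exists_pow_add_mem hφ hψ (mem_finiteRankIdeal.2 hcomm)
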